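/- arXiv:math/9606224 — 4 statements merged into one kernel-verified Lean document; each statement's English description precedes it below -/
import Mathlib

section
/- The ratio A(n,1)/A(n) equals C(2n-2, n-1)/C(3n-2, n-1), i.e., the number of n×n ASMs with the 1 of the first row in column 1 is A(n-1), equivalently A(n)·C(2n-2,n-1)/C(3n-2,n-1) = A(n-1). -/
/-- `A n` = ∏_{k=0}^{n-1} (3k+1)!/(n+k)! -/
noncomputable def asmCount (n : ℕ) : ℚ :=
  ∏ k ∈ Finset.range n, ((3 * k + 1).factorial : ℚ) / ((n + k).factorial : ℚ)

lemma prod_shift (m : ℕ) :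
    (∏ k ∈ Finset.range (m+1), (m+1+k).factorial) * m.factorial
      = ((∏ k ∈ Finset.range m, (m+k).factorial) * (2*m).factorial) * (2*m+1).factorial := by
  have h1 : (∏ k ∈ Finset.range (m+1), (m+k).factorial)
      = (∏ k ∈ Finset.range m, (m+(k+1)).factorial) * (m+0).factorial :=
    Finset.prod_range_succ' _ m
  have h2 : (∏ k ∈ Finset.range (m+1), (m+k).factorial)
      = (∏ k ∈ Finset.range m, (m+k).factorial) * (m+m).factorial :=
    Finset.prod_range_succ _ m
  rw [Finset.prod_range_succ]
  have h3 : (∏ k ∈ Finset.range m, (m+1+k).factorial)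
      = ∏ k ∈ Finset.range m, (m+(k+1)).factorial :=
    Finset.prod_congr rfl fun k _ => by rw [show m+1+k = m+(k+1) by omega]
  have h4 : (∏ k ∈ Finset.range m, (m+(k+1)).factorial) * m.factorial
      = (∏ k ∈ Finset.range m, (m+k).factorial) * (2*m).factorial := by
    rw [show (2*m) = m+m by omega, ← h2, h1]
    simp
  rw [h3, show m+1+m = 2*m+1 by omega]
  calc (∏ k ∈ Finset.range m, (m+(k+1)).factorial) * (2*m+1).factorial * m.factorial
      = ((∏ k ∈ Finset.range m, (m+(k+1)).factorial) * m.factorial) * (2*m+1).factorial := by ring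
    _ = ((∏ k ∈ Finset.range m, (m+k).factorial) * (2*m).factorial) * (2*m+1).factorial := by
        rw [h4]

theorem asmCountRef_col_one (n : ℕ) (hn : 1 ≤ n) :
    asmCount n * (Nat.choose (2 * n - 2) (n - 1) : ℚ) /
      (Nat.choose (3 * n - 2) (n - 1) : ℚ) = asmCount (n - 1) := by
  obtain ⟨m, rfl⟩ : ∃ m, n = m + 1 := ⟨n - 1, by omega⟩
  simp only [show m + 1 - 1 = m from rfl, show 2*(m+1)-2 = 2*m by omega,
    show 3*(m+1)-2 = 3*m+1 by omega]
  -- rewrite asmCount as quotient of products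
  have hA : ∀ N, asmCount N =
      (∏ k ∈ Finset.range N, ((3*k+1).factorial : ℚ)) /
      (∏ k ∈ Finset.range N, ((N+k).factorial : ℚ)) := by
    intro N
    rw [asmCount, Finset.prod_div_distrib]
  rw [hA (m+1), hA m]
  set P1 : ℚ := ∏ k ∈ Finset.range (m+1), ((3*k+1).factorial : ℚ) with hP1
  set P : ℚ := ∏ k ∈ Finset.range m, ((3*k+1).factorial : ℚ)
  set D1 : ℚ := ∏ k ∈ Finset.range (m+1), (((m+1)+k).factorial : ℚ) with hD1
  set D : ℚ := ∏ k ∈ Finset.range m, ((m+k).factorial : ℚ) with hD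
  have hP1e : P1 = P * ((3*m+1).factorial : ℚ) := by
    rw [hP1, Finset.prod_range_succ]
  have hD1e : D1 * (m.factorial : ℚ) = D * ((2*m).factorial : ℚ) * ((2*m+1).factorial : ℚ) := by
    rw [hD1, hD]
    exact_mod_cast congrArg (Nat.cast : ℕ → ℚ) (prod_shift m)
  have hc1 : ((2*m).choose m : ℚ) * (m.factorial : ℚ) * (m.factorial : ℚ)
      = ((2*m).factorial : ℚ) := by
    have := Nat.choose_mul_factorial_mul_factorial (show m ≤ 2*m by omega)
    rw [show 2*m-m = m by omega] at this
    exact_mod_cast congrArg (Nat.cast : ℕ → ℚ) this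
  have hc2 : ((3*m+1).choose m : ℚ) * (m.factorial : ℚ) * ((2*m+1).factorial : ℚ)
      = ((3*m+1).factorial : ℚ) := by
    have := Nat.choose_mul_factorial_mul_factorial (show m ≤ 3*m+1 by omega)
    rw [show 3*m+1-m = 2*m+1 by omega] at this
    exact_mod_cast congrArg (Nat.cast : ℕ → ℚ) this
  have hDne : D ≠ 0 := Finset.prod_ne_zero_iff.mpr fun k _ => by
    positivity
  have hD1ne : D1 ≠ 0 := by
    rw [hD1]
    exact Finset.prod_ne_zero_iff.mpr fun k _ => by positivity
  have hfne : ∀ N : ℕ, (N.factorial : ℚ) ≠ 0 := fun N => by positivity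
  have hcne1 : ((2*m).choose m : ℚ) ≠ 0 := by
    have := Nat.choose_pos (show m ≤ 2*m by omega)
    positivity
  have hcne2 : ((3*m+1).choose m : ℚ) ≠ 0 := by
    have := Nat.choose_pos (show m ≤ 3*m+1 by omega)
    positivity
  rw [hP1e]
  field_simp [hD1ne, hDne, hcne2]
  refine mul_right_cancel₀ (hfne m) (mul_right_cancel₀ (hfne m) ?_)
  linear_combination (P * D * ((3*m+1).factorial : ℚ)) * hc1
    - (P * ((3*m+1).choose m : ℚ) * (m.factorial : ℚ)) * hD1e
    - (P * D * ((2*m).factorial : ℚ)) * hc2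
end

section
/- Existence and uniqueness of monic orthogonal polynomials: let T be a linear functional on polynomials over a field with moments c_i = T(x^i), and suppose the Hankel determinants Δ_n = det(c_{i+j})_{0≤i,j≤n} are nonzero for all n ≥ 0. Then there exists a unique sequence of monic polynomials P_n of degree n with T(P_n · P_m) = 0 whenever m ≠ n. -/
open Polynomial Matrix Finset

namespace MOPaux

variable {K : Type*} [Field K] (T : Polynomial K →ₗ[K] K)

/-- The `n × n` Hankel matrix of moments. -/
noncomputable def Hk (n : ℕ) : Matrix (Fin n) (Fin n) K :=
  fun i j => T (X ^ ((i : ℕ) + (j : ℕ)))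

lemma Hk_isUnit
    (hΔ : ∀ n : ℕ,
      Matrix.det (fun i j : Fin (n + 1) => T (Polynomial.X ^ ((i : ℕ) + (j : ℕ)))) ≠ 0)
    (n : ℕ) : IsUnit (Hk T n) := by
  rw [Matrix.isUnit_iff_isUnit_det, isUnit_iff_ne_zero]
  cases n with
  | zero => simp [Matrix.det_fin_zero]
  | succ m => exact hΔ m

lemma T_smul (a : K) (p : Polynomial K) : T (C a * p) = a * T p := by
  rw [← smul_eq_C_mul, T.map_smul, smul_eq_mul]

/-- If `T (X^i * q) = 0` for all `i < n` then `T (p * q) = 0` for `p` of degree `< n`. -/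
lemma T_mul_eq_zero {n : ℕ} {q : Polynomial K} (hq : ∀ i < n, T (X ^ i * q) = 0)
    {p : Polynomial K} (hp : p.degree < n) : T (p * q) = 0 := by
  by_cases hp0 : p = 0
  · simp [hp0]
  have hnd : p.natDegree < n := (natDegree_lt_iff_degree_lt hp0).2 hp
  conv_lhs => rw [p.as_sum_range' n hnd, sum_mul, map_sum]
  refine Finset.sum_eq_zero fun j hj => ?_
  rw [← C_mul_X_pow_eq_monomial, mul_assoc, T_smul, hq j (mem_range.1 hj), mul_zero]

/-- The coefficients of a low-degree polynomial annihilated against all low powers vanish. -/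
lemma eq_zero_of_orth
    (hΔ : ∀ n : ℕ,
      Matrix.det (fun i j : Fin (n + 1) => T (Polynomial.X ^ ((i : ℕ) + (j : ℕ)))) ≠ 0)
    {n : ℕ} {p : Polynomial K} (hp : p.degree < n)
    (h : ∀ i < n, T (X ^ i * p) = 0) : p = 0 := by
  by_contra hp0
  have hnd : p.natDegree < n := (natDegree_lt_iff_degree_lt hp0).2 hp
  have hinj : Function.Injective (Hk T n).mulVec :=
    Matrix.mulVec_injective_iff_isUnit.2 (Hk_isUnit T hΔ n)
  have hv : (Hk T n).mulVec (fun j => p.coeff (j : ℕ)) = 0 := by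
    funext i
    have h0 : T (X ^ (i : ℕ) * p) = 0 := h i i.isLt
    have expand : T (X ^ (i : ℕ) * p)
        = ∑ j ∈ range n, T (X ^ ((i : ℕ) + j)) * p.coeff j := by
      conv_lhs => rw [p.as_sum_range' n hnd, mul_sum, map_sum]
      refine Finset.sum_congr rfl fun j _ => ?_
      rw [← C_mul_X_pow_eq_monomial,
        show X ^ (i : ℕ) * (C (p.coeff j) * X ^ j)
          = C (p.coeff j) * X ^ ((i : ℕ) + j) by ring, T_smul, mul_comm]
    simp only [Matrix.mulVec, dotProduct, Hk, Pi.zero_apply]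
    rw [Fin.sum_univ_eq_sum_range (fun j => T (X ^ ((i : ℕ) + j)) * p.coeff j) n,
      ← expand, h0]
  have hv0 : (fun j : Fin n => p.coeff (j : ℕ)) = 0 := hinj (by simp [hv])
  have hc : p.coeff p.natDegree = 0 := congrFun hv0 ⟨p.natDegree, hnd⟩
  exact hp0 (leadingCoeff_eq_zero.1 hc)

/-- Existence of a monic degree-`n` polynomial orthogonal to all lower powers. -/
lemma exists_orth
    (hΔ : ∀ n : ℕ,
      Matrix.det (fun i j : Fin (n + 1) => T (Polynomial.X ^ ((i : ℕ) + (j : ℕ)))) ≠ 0)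
    (n : ℕ) :
    ∃ Q : Polynomial K, Q.Monic ∧ Q.natDegree = n ∧ ∀ i < n, T (X ^ i * Q) = 0 := by
  have hsurj : Function.Surjective (Hk T n).mulVec :=
    Matrix.mulVec_surjective_iff_isUnit.2 (Hk_isUnit T hΔ n)
  obtain ⟨a, ha⟩ := hsurj fun i => -T (X ^ ((i : ℕ) + n))
  set p : Polynomial K := ∑ j : Fin n, C (a j) * X ^ (j : ℕ) with hp
  have hdeg : p.degree < (n : WithBot ℕ) := by
    refine lt_of_le_of_lt (degree_sum_le _ _) ?_
    rw [Finset.sup_lt_iff (by exact_mod_cast WithBot.bot_lt_coe n)]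
    intro j _
    exact lt_of_le_of_lt (degree_C_mul_X_pow_le _ _) (by exact_mod_cast j.isLt)
  have hdegX : p.degree < (X ^ n : Polynomial K).degree := by
    rwa [degree_X_pow]
  refine ⟨X ^ n + p, monic_X_pow_add hdeg, ?_, ?_⟩
  · rw [natDegree_eq_of_degree_eq_some
      (by rw [degree_add_eq_left_of_degree_lt hdegX, degree_X_pow])]
  · intro i hi
    have hTp : T (X ^ i * p) = ∑ j : Fin n, T (X ^ (i + (j : ℕ))) * a j := by
      rw [hp, Finset.mul_sum, map_sum]
      refine Finset.sum_congr rfl fun j _ => ?_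
      rw [show X ^ i * (C (a j) * X ^ (j : ℕ)) = C (a j) * X ^ (i + (j : ℕ)) by ring,
        T_smul, mul_comm]
    have hma := congrFun ha ⟨i, hi⟩
    simp only [Matrix.mulVec, dotProduct, Hk] at hma
    rw [mul_add, map_add, hTp]
    rw [show X ^ i * X ^ n = X ^ (i + n) by ring, hma]
    ring

/-- Any polynomial of degree `< n` is `T`-orthogonal to `Q n`, for any sequence `Q`
satisfying the monicity, degree and orthogonality conditions. -/
lemma T_mul_Q_eq_zero {Q : ℕ → Polynomial K}
    (hQ : ∀ n, (Q n).Monic ∧ (Q n).natDegree = n)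
    (horth : ∀ m n, m ≠ n → T (Q n * Q m) = 0) :
    ∀ (k n : ℕ) (p : Polynomial K), p.natDegree ≤ k → p.degree < n → T (p * Q n) = 0 := by
  intro k
  induction k using Nat.strong_induction_on with
  | _ k ih =>
    intro n p hk hdeg
    by_cases hp0 : p = 0
    · simp [hp0]
    have hmn : p.natDegree < n := (natDegree_lt_iff_degree_lt hp0).2 hdeg
    set m := p.natDegree with hm
    set r := p - C p.leadingCoeff * Q m with hr
    have hdegQ : (C p.leadingCoeff * Q m).degree = p.degree := by
      rw [degree_C_mul (leadingCoeff_ne_zero.2 hp0),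
        degree_eq_natDegree (hQ m).1.ne_zero, (hQ m).2,
        degree_eq_natDegree hp0]
    have hlc : p.leadingCoeff = (C p.leadingCoeff * Q m).leadingCoeff := by
      rw [leadingCoeff_mul, leadingCoeff_C, (hQ m).1.leadingCoeff, mul_one]
    have hrp : p = r + C p.leadingCoeff * Q m := by rw [hr]; ring
    have hTr : T (r * Q n) = 0 := by
      by_cases hr0 : r = 0
      · simp [hr0]
      have hrd : r.degree < p.degree := degree_sub_lt hdegQ.symm hp0 hlc
      have hrnd : r.natDegree < m := by
        rw [hm, natDegree_lt_iff_degree_lt hr0, ← degree_eq_natDegree hp0]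
        exact hrd
      exact ih r.natDegree (lt_of_lt_of_le hrnd hk) n r le_rfl
        (hrd.trans (by rw [degree_eq_natDegree hp0]; exact_mod_cast hmn))
    have hTQ : T (Q m * Q n) = 0 := by
      rw [show Q m * Q n = Q n * Q m by ring]
      exact horth m n hmn.ne
    rw [hrp, add_mul, map_add, hTr, zero_add, mul_assoc, T_smul, hTQ, mul_zero]

end MOPaux

/-- Existence and uniqueness of monic orthogonal polynomials with respect to a
linear functional all of whose Hankel determinants of moments are nonzero. -/
theorem exists_unique_monic_orthogonal {K : Type*} [Field K]
    (T : Polynomial K →ₗ[K] K)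
    (hΔ : ∀ n : ℕ,
      Matrix.det (fun i j : Fin (n + 1) => T (Polynomial.X ^ ((i : ℕ) + (j : ℕ)))) ≠ 0) :
    ∃! P : ℕ → Polynomial K,
      (∀ n, (P n).Monic ∧ (P n).natDegree = n) ∧
        ∀ m n, m ≠ n → T (P n * P m) = 0 := by
  classical
  choose P hmonic hdeg horthX using MOPaux.exists_orth T hΔ
  have hdegP : ∀ n, (P n).degree = (n : WithBot ℕ) := fun n => by
    rw [degree_eq_natDegree (hmonic n).ne_zero, hdeg n]
  have horth : ∀ m n, m ≠ n → T (P n * P m) = 0 := by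
    intro m n hmn
    rcases lt_or_gt_of_ne hmn with h | h
    · rw [mul_comm]
      exact MOPaux.T_mul_eq_zero T (horthX n) (by rw [hdegP m]; exact_mod_cast h)
    · exact MOPaux.T_mul_eq_zero T (horthX m) (by rw [hdegP n]; exact_mod_cast h)
  refine ⟨P, ⟨fun n => ⟨hmonic n, hdeg n⟩, horth⟩, ?_⟩
  rintro Q ⟨hQ, hQorth⟩
  funext n
  by_contra hne
  have hQdeg : (Q n).degree = (n : WithBot ℕ) := by
    rw [degree_eq_natDegree (hQ n).1.ne_zero, (hQ n).2]
  set d := Q n - P n with hd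
  have hd0 : d ≠ 0 := fun h => hne (by rwa [hd, sub_eq_zero] at h)
  have hddeg : d.degree < (n : WithBot ℕ) := by
    rw [hd, ← hQdeg]
    exact degree_sub_lt (by rw [hQdeg, hdegP]) (hQ n).1.ne_zero
      (by rw [(hQ n).1.leadingCoeff, (hmonic n).leadingCoeff])
  have hTd : ∀ i < n, T (Polynomial.X ^ i * d) = 0 := by
    intro i hi
    have h1 : T (Polynomial.X ^ i * Q n) = 0 := by
      refine MOPaux.T_mul_Q_eq_zero T hQ hQorth i n (Polynomial.X ^ i)
        (Polynomial.natDegree_X_pow_le i) ?_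
      rw [Polynomial.degree_X_pow]
      exact_mod_cast hi
    rw [hd, mul_sub, map_sub, h1, horthX n i hi, sub_zero]
  exact hd0 (MOPaux.eq_zero_of_orth T hΔ hddeg hTd)
end

section
/- Bordered Hankel determinant formula: let T, S be linear functionals on polynomials with moments c_i = T(x^i), d_i = S(x^i), and let Γ_n be the determinant of the (n+1)×(n+1) matrix whose first n rows are (c_{i+j})_{0≤i≤n-1,0≤j≤n} and whose last row is (d_0, ..., d_n). If the Hankel determinants Δ_k of T are nonzero, then Γ_n/Δ_n = S(P_n)/T(x^n P_n), where P_n is the monic orthogonal polynomial of degree n for T. -/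
/-
Adding to the last column of `Γₙ` and of `Δₙ` the combination of all columns with the
coefficients of `Pₙ` changes neither determinant, since `Pₙ` is monic. By orthogonality the new
last column vanishes except in its bottom entry, which is `S(Pₙ)` for `Γₙ` and `T(xⁿPₙ)` for `Δₙ`;
expanding along it gives `Γₙ = S(Pₙ) Δₙ₋₁` and `Δₙ = T(xⁿPₙ) Δₙ₋₁`, with `Δₙ₋₁ ≠ 0`
(the empty determinant `1` when `n = 0`).
-/

open Polynomial
open scoped Matrix

namespace Matrix

variable {R : Type*} [CommRing R]

theorem det_updateCol_mulVec {ι : Type*} [Fintype ι] [DecidableEq ι] (A : Matrix ι ι R) (j : ι)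
    (v : ι → R) : (A.updateCol j (A *ᵥ v)).det = v j * A.det := by
  rw [← smul_eq_mul, ← det_updateCol_sum]
  simp only [smul_eq_mul, mul_comm]
  rfl

theorem det_updateCol_last_of_apply_castSucc_eq_zero {n : ℕ}
    (A : Matrix (Fin (n + 1)) (Fin (n + 1)) R) {u : Fin (n + 1) → R}
    (hu : ∀ i : Fin n, u i.castSucc = 0) :
    (A.updateCol (Fin.last n) u).det =
      u (Fin.last n) * (A.submatrix Fin.castSucc Fin.castSucc).det := by
  rw [det_succ_column _ (Fin.last n), Finset.sum_eq_single (Fin.last n)]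
  · have hminor : (A.updateCol (Fin.last n) u).submatrix Fin.castSucc Fin.castSucc =
        A.submatrix Fin.castSucc Fin.castSucc := by
      ext i j
      simp [Fin.castSucc_ne_last]
    simp [← two_mul, Fin.succAbove_last, hminor]
  · intro i _ hi
    obtain ⟨i, rfl⟩ := Fin.exists_castSucc_eq.mpr hi
    simp [hu]
  · simp

theorem det_eq_mulVec_last_mul_det_submatrix_castSucc {n : ℕ}
    (A : Matrix (Fin (n + 1)) (Fin (n + 1)) R) {v : Fin (n + 1) → R} (hv : v (Fin.last n) = 1)
    (hA : ∀ i : Fin n, (A *ᵥ v) i.castSucc = 0) :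
    A.det = (A *ᵥ v) (Fin.last n) * (A.submatrix Fin.castSucc Fin.castSucc).det := by
  rw [← det_updateCol_last_of_apply_castSucc_eq_zero A hA, det_updateCol_mulVec, hv, one_mul]

end Matrix

namespace Polynomial

theorem map_X_pow_dotProduct_coeff {R : Type*} [CommSemiring R] {m : ℕ} (φ : R[X] →ₗ[R] R)
    {P : R[X]} (hP : P.natDegree < m) :
    (fun j : Fin m => φ (X ^ (j : ℕ))) ⬝ᵥ (fun j => P.coeff j) = φ P := by
  conv_rhs => rw [P.as_sum_range_C_mul_X_pow' hP, map_sum]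
  simp only [dotProduct, ← smul_eq_C_mul, map_smul, smul_eq_mul]
  rw [Fin.sum_univ_eq_sum_range (fun j => φ (X ^ j) * P.coeff j) m]
  exact Finset.sum_congr rfl fun _ _ => mul_comm _ _

theorem map_X_pow_add_dotProduct_coeff {R : Type*} [CommSemiring R] {m : ℕ} (φ : R[X] →ₗ[R] R)
    (k : ℕ) {P : R[X]} (hP : P.natDegree < m) :
    (fun j : Fin m => φ (X ^ (k + j))) ⬝ᵥ (fun j => P.coeff j) = φ (X ^ k * P) := by
  simpa only [LinearMap.comp_apply, LinearMap.mulLeft_apply, ← pow_add] using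
    map_X_pow_dotProduct_coeff (φ ∘ₗ LinearMap.mulLeft R (X ^ k)) hP

end Polynomial

theorem bordered_hankel_det_formula_general {K : Type*} [Field K]
    (T S : Polynomial K →ₗ[K] K)
    (hΔ : ∀ m : ℕ,
      Matrix.det (fun i j : Fin (m + 1) => T (X ^ ((i : ℕ) + (j : ℕ)))) ≠ 0)
    (n : ℕ) (P : Polynomial K)
    (hmonic : P.Monic) (hdeg : P.natDegree = n)
    (horth : ∀ Q : Polynomial K, Q.degree < n → T (P * Q) = 0) :
    Matrix.det (fun i j : Fin (n + 1) =>
        if (i : ℕ) < n then T (X ^ ((i : ℕ) + (j : ℕ))) else S (X ^ (j : ℕ))) /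
      Matrix.det (fun i j : Fin (n + 1) => T (X ^ ((i : ℕ) + (j : ℕ)))) =
      S P / T (X ^ n * P) := by
  set A : Matrix (Fin (n + 1)) (Fin (n + 1)) K := fun i j => T (X ^ ((i : ℕ) + (j : ℕ)))
  set B : Matrix (Fin (n + 1)) (Fin (n + 1)) K := fun i j =>
    if (i : ℕ) < n then T (X ^ ((i : ℕ) + (j : ℕ))) else S (X ^ (j : ℕ))
  set v : Fin (n + 1) → K := fun j => P.coeff j
  have hv : v (Fin.last n) = 1 := by simp only [v, Fin.val_last, ← hdeg]; exact hmonic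
  have hP : P.natDegree < n + 1 := hdeg ▸ n.lt_succ_self
  have hA (i : Fin (n + 1)) : (A *ᵥ v) i = T (X ^ (i : ℕ) * P) :=
    map_X_pow_add_dotProduct_coeff T i hP
  have hT_X_pow_mul (i : Fin n) : T (X ^ (i : ℕ) * P) = 0 := by
    rw [mul_comm]
    exact horth _ ((degree_X_pow_le _).trans_lt (by exact_mod_cast i.is_lt))
  have hA_castSucc (i : Fin n) : (A *ᵥ v) i.castSucc = 0 := (hA _).trans (hT_X_pow_mul i)
  have hB_castSucc (i : Fin n) : (B *ᵥ v) i.castSucc = 0 :=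
    (congrArg (· ⬝ᵥ v) (funext fun _ => if_pos i.is_lt)).trans (hA_castSucc i)
  have hB_last : (B *ᵥ v) (Fin.last n) = S P := by
    simpa [B, Matrix.mulVec] using map_X_pow_dotProduct_coeff S hP
  have hminor : B.submatrix Fin.castSucc Fin.castSucc = A.submatrix Fin.castSucc Fin.castSucc := by
    ext i j
    exact if_pos i.is_lt
  have hminor_det : (A.submatrix Fin.castSucc Fin.castSucc).det ≠ 0 := by
    cases n with
    | zero => simp
    | succ m => exact hΔ m
  rw [B.det_eq_mulVec_last_mul_det_submatrix_castSucc hv hB_castSucc,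
    A.det_eq_mulVec_last_mul_det_submatrix_castSucc hv hA_castSucc,
    hB_last, hA, hminor, mul_div_mul_right _ _ hminor_det, Fin.val_last]

/-- Bordered Hankel determinant formula: `Γₙ/Δₙ = S(Pₙ)/T(xⁿPₙ)`. -/
theorem bordered_hankel_det_formula {K : Type*} [Field K]
    (T S : Polynomial K →ₗ[K] K)
    (hΔ : ∀ m : ℕ,
      Matrix.det (fun i j : Fin (m + 1) => T (X ^ ((i : ℕ) + (j : ℕ)))) ≠ 0)
    (n : ℕ) (hn : 1 ≤ n) (P : Polynomial K)
    (hmonic : P.Monic) (hdeg : P.natDegree = n)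
    (horth : ∀ Q : Polynomial K, Q.degree < n → T (P * Q) = 0) :
    Matrix.det (fun i j : Fin (n + 1) =>
        if (i : ℕ) < n then T (X ^ ((i : ℕ) + (j : ℕ))) else S (X ^ (j : ℕ))) /
      Matrix.det (fun i j : Fin (n + 1) => T (X ^ ((i : ℕ) + (j : ℕ)))) =
      S P / T (X ^ n * P) :=
  bordered_hankel_det_formula_general T S hΔ n P hmonic hdeg horth
end

section
/- Specialization of equation (Done) at X = 0: for all n ≥ 0, ((-1)^n (3n+1)!)/(3^{n+1} n!³ (−n+1/3)_{2n+1}) · n! · (2/3)_n = (√(-3))^n Σ_{r=0}^n w^{−r−n} C(n+r,n) C(2n−r,n), where w = e^{iπ/3}; equivalently Σ_{r=0}^n w^{−r−n} C(n+r,n) C(2n−r,n) is a real number equal to the left side divided by (i√3)^n. -/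
open Complex

/-- The rising factorial `(a)ₘ = a(a+1)⋯(a+m-1)`. -/
noncomputable def risingFac (a : ℂ) (m : ℕ) : ℂ :=
  ∏ i ∈ Finset.range m, (a + i)

/-
With `u = w⁻¹ = e^{-iπ/3}` one has `u² = u - 1` and `i√3 = 1 - 2u`, and the sum is
`S n = ∑ r, u^(n+r) C(n+r,n) C(2n-r,n)`. Zeilberger's algorithm gives the first-order recurrence
`(n+1)(1-2u) S (n+1) = 3(3n+2) S n`, proved by telescoping against an explicit certificate, so
`n! (1-2u)^n S n = 9^n (2/3)_n`. On the left, `3^(2n+1) (1/3-n)_{2n+1} = ∏_{|j| ≤ n} (3j+1)` is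
`(-1)^n` times the product of the integers up to `3n+1` prime to `3`, that is `(3n+1)! / (3^n n!)`,
so the left side collapses to `9^n (2/3)_n / n!` as well.
-/

open Finset

theorem Nat.succ_mul_choose_add_succ (n k : ℕ) :
    (k + 1) * (n + k + 1).choose n = (n + k + 1) * (n + k).choose n := by
  rw [Nat.choose_symm_add, add_assoc, Nat.choose_symm_add, ← add_assoc,
    Nat.add_one_mul_choose_eq (n + k) k, mul_comm]

namespace BinomProd

variable {K : Type*} [CommRing K]

def term (u : K) (n r : ℕ) : K :=
  u ^ (n + r) * ((n + r).choose n : K) * ((2 * n - r).choose n : K)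

theorem term_succ_zero (u : K) (n : ℕ) :
    (n + 1) * term u (n + 1) 0 = 2 * u * (2 * n + 1) * term u n 0 := by
  have h := congrArg (Nat.cast : ℕ → K) (Nat.succ_mul_centralBinom_succ n)
  simp only [Nat.centralBinom_eq_two_mul_choose] at h
  push_cast at h
  simp only [term, add_zero, Nat.choose_self, Nat.cast_one, mul_one, pow_succ,
    show 2 * (n + 1) = 2 * n + 2 by ring]
  linear_combination u ^ n * u * h

theorem term_succ_succ (u : K) {n s : ℕ} (hs : s ≤ 2 * n) :
    (n + 1) ^ 2 * (s + 1) * term u (n + 1) (s + 1) =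
      u ^ 2 * (n + s + 2) * (n + s + 1) * (2 * n + 1 - s) * term u n s := by
  have h₁ := congrArg (Nat.cast : ℕ → K) (Nat.add_one_mul_choose_eq (n + s + 1) n)
  have h₂ := congrArg (Nat.cast : ℕ → K) (Nat.succ_mul_choose_add_succ n s)
  have h₃ := congrArg (Nat.cast : ℕ → K) (Nat.add_one_mul_choose_eq (2 * n - s) n)
  simp only [term]
  rw [show 2 * (n + 1) - (s + 1) = 2 * n - s + 1 by omega,
    show n + 1 + (s + 1) = n + s + 1 + 1 by ring]
  push_cast [Nat.cast_sub hs] at h₁ h₂ h₃ ⊢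
  linear_combination u ^ (n + s + 2) * (s + 1) *
      (-((n + 1) * ((n + s + 1 + 1).choose (n + 1) : K)) * h₃ -
        (2 * n - s + 1) * ((2 * n - s).choose n : K) * h₁) +
    u ^ (n + s + 2) * (n + s + 2) * (2 * n - s + 1) * ((2 * n - s).choose n : K) * h₂

theorem term_succ_right (u : K) {n s : ℕ} (hs : s ≤ n) :
    (s + 1) * (2 * n - s) * term u n (s + 1) = u * (n + s + 1) * (n - s) * term u n s := by
  rcases Nat.eq_zero_or_pos n with rfl | hn
  · obtain rfl : s = 0 := by omega
    simp
  have h₁ := congrArg (Nat.cast : ℕ → K) (Nat.succ_mul_choose_add_succ n s)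
  have h₂ := congrArg (Nat.cast : ℕ → K) (Nat.choose_mul_succ_eq (2 * n - (s + 1)) n)
  rw [show 2 * n - (s + 1) + 1 = 2 * n - s by omega, show 2 * n - s - n = n - s by omega] at h₂
  simp only [term, ← add_assoc]
  push_cast [Nat.cast_sub hs, Nat.cast_sub (show s ≤ 2 * n by omega),
    Nat.cast_sub (show s + 1 ≤ 2 * n by omega)] at h₁ h₂ ⊢
  linear_combination u ^ (n + s + 1) * (2 * n - s) * ((2 * n - (s + 1)).choose n : K) * h₁ +
    u ^ (n + s + 1) * (n + s + 1) * ((n + s).choose n : K) * h₂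

theorem term_self_add_one (u : K) {n : ℕ} (hn : n ≠ 0) : term u n (n + 1) = 0 := by
  simp [term, Nat.choose_eq_zero_of_lt (show 2 * n - (n + 1) < n by omega)]

def termSum (u : K) (n : ℕ) : K :=
  ∑ r ∈ range (n + 1), term u n r

-- Zeilberger's certificate for `termSum_succ`, indexed so that its value at `r + 1` is a
-- polynomial multiple of `term u n r`.
def gosperCert (u : K) (n : ℕ) : ℕ → K
  | 0 => 0
  | r + 1 => -(n + r + 1) * (n + r + 2 + 2 * u * (2 * n + 1 - r)) * term u n r

variable [IsDomain K] [CharZero K]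

theorem term_recurrence_eq_gosperCert_sub (u : K) (hu : u ^ 2 = u - 1) {n r : ℕ} (hn : n ≠ 0)
    (hr : r ≤ n + 1) :
    (n + 1) * ((n + 1) * (1 - 2 * u) * term u (n + 1) r - 3 * (3 * n + 2) * term u n r) =
      gosperCert u n (r + 1) - gosperCert u n r := by
  rcases r with _ | s
  · simp only [gosperCert, Nat.cast_zero]
    linear_combination (n + 1) * (1 - 2 * u) * term_succ_zero u n +
      -4 * (n + 1) * (2 * n + 1) * term u n 0 * hu
  · have hs : s ≤ n := by omega
    have hne : ((s : K) + 1) * (2 * n - s) ≠ 0 := by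
      refine mul_ne_zero (by exact_mod_cast s.succ_ne_zero) ?_
      rw [← Nat.cast_ofNat, ← Nat.cast_mul, ← Nat.cast_sub (by omega)]
      exact Nat.cast_ne_zero.mpr (by omega)
    refine mul_left_cancel₀ hne ?_
    simp only [gosperCert]
    push_cast
    linear_combination (1 - 2 * u) * (2 * n - s) * term_succ_succ u (show s ≤ 2 * n by omega) +
      (-(n + 1) * (3 * (3 * n + 2)) + (n + s + 2) * (n + s + 3 + 2 * u * (2 * n - s))) *
        term_succ_right u hs +
      term u n s * (n + s + 1) * (s - 2 * n) * (s + n + 2) * (s + 1 + 2 * u * (2 * n + 1 - s)) * hu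

theorem termSum_succ (u : K) (hu : u ^ 2 = u - 1) (n : ℕ) :
    (n + 1) * (1 - 2 * u) * termSum u (n + 1) = 3 * (3 * n + 2) * termSum u n := by
  rcases Nat.eq_zero_or_pos n with rfl | hn
  -- the telescoping below needs `term u n (n + 1) = 0`, false at `n = 0` (`2 * 0 - 1 = 0` in `ℕ`)
  · have h₀ : termSum u 0 = 1 := by simp [termSum, term]
    have h₁ : termSum u 1 = u * 2 + u ^ 2 * 2 := by norm_num [termSum, term, sum_range_succ]
    rw [h₀, h₁]
    linear_combination (-4 * u - 6) * hu
  have htel : ∑ r ∈ range (n + 2),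
      (n + 1) * ((n + 1) * (1 - 2 * u) * term u (n + 1) r - 3 * (3 * n + 2) * term u n r) = 0 := by
    rw [sum_congr rfl fun r hr => term_recurrence_eq_gosperCert_sub u hu hn.ne'
      (Nat.le_of_lt_succ (mem_range.mp hr)), sum_range_sub]
    simp [gosperCert, term_self_add_one u hn.ne']
  rw [← mul_sum, sum_sub_distrib, ← mul_sum, ← mul_sum, sum_range_succ (term u n),
    term_self_add_one u hn.ne', add_zero] at htel
  have hn₁ : (n : K) + 1 ≠ 0 := by exact_mod_cast n.succ_ne_zero
  simpa [termSum, sub_eq_zero] using (mul_eq_zero.mp htel).resolve_left hn₁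

theorem factorial_mul_pow_mul_termSum (u : K) (hu : u ^ 2 = u - 1) (n : ℕ) :
    n.factorial * (1 - 2 * u) ^ n * termSum u n = ∏ k ∈ range n, (3 * (3 * k + 2) : K) := by
  induction n with
  | zero => simp [termSum, term]
  | succ n ih =>
    rw [prod_range_succ, ← ih, Nat.factorial_succ, pow_succ]
    push_cast
    linear_combination n.factorial * (1 - 2 * u) ^ n * termSum_succ u hu n

end BinomProd

theorem risingFac_succ (a : ℂ) (m : ℕ) : risingFac a (m + 1) = risingFac a m * (a + m) :=
  prod_range_succ _ _

theorem risingFac_succ' (a : ℂ) (m : ℕ) : risingFac a (m + 1) = a * risingFac (a + 1) m := by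
  simp only [risingFac, prod_range_succ', Nat.cast_add, Nat.cast_one, Nat.cast_zero, add_zero]
  rw [mul_comm]
  simp only [add_assoc, add_comm (1 : ℂ)]

theorem nine_pow_mul_risingFac_two_thirds (n : ℕ) :
    9 ^ n * risingFac (2 / 3) n = ∏ k ∈ range n, (3 * (3 * k + 2) : ℂ) := by
  nth_rw 1 [risingFac, ← card_range n, pow_card_mul_prod]
  exact prod_congr rfl fun k _ => by ring

theorem pow_mul_factorial_mul_risingFac_one_third_sub (n : ℕ) :
    3 ^ n * n.factorial * 3 ^ (2 * n + 1) * risingFac (-(n : ℂ) + 1 / 3) (2 * n + 1) =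
      (-1) ^ n * (3 * n + 1).factorial := by
  induction n with
  | zero => simp [risingFac]
  | succ n ih =>
    have hsplit : risingFac (-((n + 1 : ℕ) : ℂ) + 1 / 3) (2 * (n + 1) + 1) =
        (-((n : ℂ) + 1) + 1 / 3) * risingFac (-(n : ℂ) + 1 / 3) (2 * n + 1) * (n + 4 / 3) := by
      rw [show 2 * (n + 1) + 1 = 2 * n + 1 + 1 + 1 by ring, risingFac_succ', risingFac_succ,
        show -((n + 1 : ℕ) : ℂ) + 1 / 3 + 1 = -(n : ℂ) + 1 / 3 by push_cast; ring]
      push_cast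
      ring
    rw [show 3 * (n + 1) + 1 = 3 * n + 1 + 1 + 1 + 1 by ring,
      Nat.factorial_succ (3 * n + 1 + 1 + 1), Nat.factorial_succ (3 * n + 1 + 1),
      Nat.factorial_succ (3 * n + 1), Nat.factorial_succ n, hsplit]
    push_cast
    linear_combination -(3 * (n : ℂ) + 3) * (3 * n + 2) * (3 * n + 4) * ih

theorem inv_exp_pi_mul_I_div_three :
    (exp (Real.pi * I / 3))⁻¹ = 1 / 2 - ((√3 : ℝ) : ℂ) / 2 * I := by
  rw [← exp_neg,
    show -((Real.pi : ℂ) * I / 3) = ((-(Real.pi / 3) : ℝ) : ℂ) * I by push_cast; ring,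
    exp_mul_I, ← ofReal_cos, ← ofReal_sin, Real.cos_neg, Real.sin_neg, Real.cos_pi_div_three,
    Real.sin_pi_div_three]
  push_cast
  ring

theorem inv_exp_pi_mul_I_div_three_sq :
    (exp (Real.pi * I / 3))⁻¹ ^ 2 = (exp (Real.pi * I / 3))⁻¹ - 1 := by
  have hsqrt : ((√3 : ℝ) : ℂ) ^ 2 = 3 := by
    exact_mod_cast Real.sq_sqrt (by norm_num : (0 : ℝ) ≤ 3)
  rw [inv_exp_pi_mul_I_div_three]
  linear_combination (((√3 : ℝ) : ℂ) ^ 2 / 4) * I_sq - (1 / 4) * hsqrt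

theorem I_mul_sqrt_three_eq_one_sub_two_mul_inv_exp :
    I * ((√3 : ℝ) : ℂ) = 1 - 2 * (exp (Real.pi * I / 3))⁻¹ := by
  rw [inv_exp_pi_mul_I_div_three]
  ring

theorem neg_one_pow_mul_factorial_div_mul_risingFac (n : ℕ) :
    ((-1 : ℂ) ^ n * ((3 * n + 1).factorial : ℂ) /
        (3 ^ (n + 1) * ((n.factorial : ℂ)) ^ 3 * risingFac (-(n : ℂ) + 1 / 3) (2 * n + 1))) *
        (n.factorial : ℂ) * risingFac (2 / 3) n =
      9 ^ n * risingFac (2 / 3) n / n.factorial := by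
  have hR := pow_mul_factorial_mul_risingFac_one_third_sub n
  have hR0 : risingFac (-(n : ℂ) + 1 / 3) (2 * n + 1) ≠ 0 := by
    rintro h
    rw [h, mul_zero, eq_comm] at hR
    simp [Nat.factorial_ne_zero] at hR
  rw [← hR, show (9 : ℂ) ^ n = 3 ^ (2 * n) by rw [pow_mul]; norm_num]
  generalize risingFac (-(n : ℂ) + 1 / 3) (2 * n + 1) = R at hR0 ⊢
  have hf : (n.factorial : ℂ) ≠ 0 := by exact_mod_cast n.factorial_ne_zero
  field_simp
  ring

open BinomProd in
/-- Specialization of equation (Done) at `X = 0`. -/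
theorem equation_done_at_zero (n : ℕ) (w : ℂ)
    (hw : w = Complex.exp (Real.pi * I / 3)) :
    ((-1 : ℂ) ^ n * ((3 * n + 1).factorial : ℂ) /
        (3 ^ (n + 1) * ((n.factorial : ℂ)) ^ 3 *
          risingFac (-(n : ℂ) + 1 / 3) (2 * n + 1))) *
        (n.factorial : ℂ) * risingFac (2 / 3) n =
      (I * Real.sqrt 3) ^ n *
        ∑ r ∈ Finset.range (n + 1),
          w ^ (-(r : ℤ) - (n : ℤ)) * (Nat.choose (n + r) n : ℂ) *
            (Nat.choose (2 * n - r) n : ℂ) := by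
  have hsum : ∑ r ∈ range (n + 1), w ^ (-(r : ℤ) - (n : ℤ)) * (Nat.choose (n + r) n : ℂ) *
      (Nat.choose (2 * n - r) n : ℂ) = termSum w⁻¹ n := by
    refine sum_congr rfl fun r _ => ?_
    rw [show -(r : ℤ) - n = -((n + r : ℕ) : ℤ) by push_cast; ring, zpow_neg, zpow_natCast,
      ← inv_pow]
    rfl
  have hf : (n.factorial : ℂ) ≠ 0 := by exact_mod_cast n.factorial_ne_zero
  rw [hsum, neg_one_pow_mul_factorial_div_mul_risingFac, div_eq_iff hf,
    nine_pow_mul_risingFac_two_thirds, hw, I_mul_sqrt_three_eq_one_sub_two_mul_inv_exp,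
    ← factorial_mul_pow_mul_termSum _ inv_exp_pi_mul_I_div_three_sq n]
  ring
end
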